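/- For any prime p, the matrices B = [[0,1],[-1,0]] and U_p = [[p,0],[0,1/p]] satisfy B = A^{-1} Q^p A^{-1} and U_p = B^{-1} Q A^{-p} Q, where A = [[1,0],[1,1]] and Q = [[1,1/p],[0,1]]. Consequently the group generated by A and Q is all of SL_2(Z[1/p]). -/

import Mathlib

abbrev SL2Q := Matrix.SpecialLinearGroup (Fin 2) ℚ

/-- A = [[1,0],[1,1]] -/
def matA : SL2Q := ⟨!![1,0;1,1], by norm_num [Matrix.det_fin_two_of]⟩
/-- B = [[0,1],[-1,0]] -/
def matB : SL2Q := ⟨!![0,1;-1,0], by norm_num [Matrix.det_fin_two_of]⟩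
/-- Q_q = [[1,q],[0,1]] -/
def matQ (q : ℚ) : SL2Q := ⟨!![1,q;0,1], by norm_num [Matrix.det_fin_two_of]⟩
/-- U_p = [[p,0],[0,1/p]] -/
def matU (p : ℚ) (hp : p ≠ 0) : SL2Q := ⟨!![p,0;0,p⁻¹], by rw [Matrix.det_fin_two_of]; field_simp; norm_num⟩
/-- lower unipotent [[1,0],[x,1]] -/
def matL (x : ℚ) : SL2Q := ⟨!![1,0;x,1], by norm_num [Matrix.det_fin_two_of]⟩

/-!
The two identities are matrix computations. For the generation statement let `H = ⟨A, Q⟩`;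
it contains `B` and `U_p` by the identities, and `Q_k = Q^{pk}` for `k ∈ ℤ`. Conjugation by
`U_p^n` multiplies the upper right entry of `Q_x` by `p^{2n}`, so `H` contains `Q_x` for every
`x ∈ ℤ[1/p]`. Given `M ∈ SL₂(ℤ[1/p])`, multiplying on the right by a power of `U_p` makes its
first column integral, and the Euclidean algorithm on that column, carried out by left
multiplication with `B Q_t` (`t ∈ ℤ`), reduces it to an upper triangular matrix
`diag(a, a⁻¹) Q_x`. Since `a ∈ ℤ` is a unit of `ℤ[1/p]`, `a = ±p^i`, so
`diag(a, a⁻¹) = B^{2ε} U_p^i ∈ H`.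
-/

open Matrix

theorem Matrix.SpecialLinearGroup.mem_range_map_subtype_iff {n K : Type*} [Fintype n]
    [DecidableEq n] [CommRing K] {R : Subring K} {M : SpecialLinearGroup n K} :
    M ∈ (SpecialLinearGroup.map R.subtype).range ↔ ∀ i j, M i j ∈ R := by
  refine ⟨?_, fun h => ?_⟩
  · rintro ⟨N, rfl⟩ i j
    exact (N i j).2
  · let N : Matrix n n R := Matrix.of fun i j => ⟨M i j, h i j⟩
    have hN : R.subtype.mapMatrix N = M := rfl
    refine ⟨⟨N, R.subtype_injective ?_⟩, rfl⟩
    rw [RingHom.map_det, hN, M.2, map_one]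

@[simp] lemma coe_matA : (matA : Matrix (Fin 2) (Fin 2) ℚ) = !![1, 0; 1, 1] := rfl
@[simp] lemma coe_matB : (matB : Matrix (Fin 2) (Fin 2) ℚ) = !![0, 1; -1, 0] := rfl
@[simp] lemma coe_matQ (x : ℚ) : (matQ x : Matrix (Fin 2) (Fin 2) ℚ) = !![1, x; 0, 1] := rfl
@[simp] lemma coe_matL (x : ℚ) : (matL x : Matrix (Fin 2) (Fin 2) ℚ) = !![1, 0; x, 1] := rfl
@[simp] lemma coe_matU (u : ℚ) (hu : u ≠ 0) :
    (matU u hu : Matrix (Fin 2) (Fin 2) ℚ) = !![u, 0; 0, u⁻¹] := rfl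

def matQChar : AddChar ℚ SL2Q where
  toFun := matQ
  map_zero_eq_one' := by apply Subtype.ext; simp [one_fin_two]
  map_add_eq_mul' x y := by apply Subtype.ext; simp [add_comm]

def matLChar : AddChar ℚ SL2Q where
  toFun := matL
  map_zero_eq_one' := by apply Subtype.ext; simp [one_fin_two]
  map_add_eq_mul' x y := by apply Subtype.ext; simp

lemma matQ_zpow (x : ℚ) (k : ℤ) : matQ x ^ k = matQ (k * x) := by
  rw [← zsmul_eq_mul]
  exact (matQChar.map_zsmul_eq_zpow k x).symm

lemma matA_zpow (k : ℤ) : matA ^ k = matL k := by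
  rw [show matA = matL 1 from rfl, ← mul_one (k : ℚ), ← zsmul_eq_mul]
  exact (matLChar.map_zsmul_eq_zpow k 1).symm

lemma matU_mul (u v : ℚ) (hu : u ≠ 0) (hv : v ≠ 0) :
    matU (u * v) (mul_ne_zero hu hv) = matU u hu * matU v hv := by
  apply Subtype.ext; simp [mul_comm]

lemma matU_pow (u : ℚ) (hu : u ≠ 0) (n : ℕ) : matU (u ^ n) (pow_ne_zero n hu) = matU u hu ^ n := by
  induction n with
  | zero => apply Subtype.ext; simp [one_fin_two]
  | succ n ih =>
    simp only [pow_succ, ← ih]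
    exact matU_mul _ _ _ _

lemma matB_sq : matB ^ 2 = matU (-1) (by norm_num) := by
  apply Subtype.ext; simp [sq]

lemma matA_inv_mul_matQ_one_mul_matA_inv : matA⁻¹ * matQ 1 * matA⁻¹ = matB := by
  apply Subtype.ext
  simp [adjugate_fin_two]

lemma matU_eq_matB_inv_mul_matQ_mul_matL_mul_matQ (u : ℚ) (hu : u ≠ 0) :
    matU u hu = matB⁻¹ * matQ u⁻¹ * matL (-u) * matQ u⁻¹ := by
  apply Subtype.ext
  simp [adjugate_fin_two, hu]

lemma matU_mul_matQ_mul_matU_inv (u : ℚ) (hu : u ≠ 0) (x : ℚ) :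
    matU u hu * matQ x * (matU u hu)⁻¹ = matQ (u ^ 2 * x) := by
  apply Subtype.ext
  simp [adjugate_fin_two, hu]
  ring

lemma matB_mul_matQ_mul_apply_zero_zero (t : ℚ) (M : SL2Q) : (matB * matQ t * M) 0 0 = M 1 0 := by
  simp [mul_apply]

lemma matB_mul_matQ_mul_apply_one_zero (t : ℚ) (M : SL2Q) :
    (matB * matQ t * M) 1 0 = -(M 0 0 + t * M 1 0) := by
  simp [mul_apply]
  ring

lemma mul_matU_apply_zero (M : SL2Q) (u : ℚ) (hu : u ≠ 0) (i : Fin 2) :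
    (M * matU u hu) i 0 = M i 0 * u := by
  simp [mul_apply]

/-- `ℤ[1/p]` as a subring of `ℚ`. -/
def awaySubring (p : ℕ) : Subring ℚ where
  carrier := {x | ∃ n : ℕ, ∃ z : ℤ, x * p ^ n = z}
  mul_mem' := by
    rintro x y ⟨n, z, hz⟩ ⟨m, w, hw⟩
    exact ⟨n + m, z * w, by push_cast; rw [← hz, ← hw]; ring⟩
  one_mem' := ⟨0, 1, by simp⟩
  add_mem' := by
    rintro x y ⟨n, z, hz⟩ ⟨m, w, hw⟩
    exact ⟨n + m, z * p ^ m + w * p ^ n, by push_cast; rw [← hz, ← hw]; ring⟩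
  zero_mem' := ⟨0, 0, by simp⟩
  neg_mem' := by
    rintro x ⟨n, z, hz⟩
    exact ⟨n, -z, by push_cast; rw [← hz]; ring⟩

section

variable {p : ℕ}

lemma inv_natCast_mem_awaySubring (hp : p ≠ 0) : (p : ℚ)⁻¹ ∈ awaySubring p :=
  ⟨1, 1, by simp [hp]⟩

lemma intCast_div_pow_mem_awaySubring (hp : p ≠ 0) (a : ℤ) (n : ℕ) :
    (a : ℚ) / p ^ n ∈ awaySubring p := by
  rw [div_eq_mul_inv, ← inv_pow]
  exact mul_mem (intCast_mem _ a) (pow_mem (inv_natCast_mem_awaySubring hp) n)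

def sl2Away (p : ℕ) : Subgroup SL2Q := (SpecialLinearGroup.map (awaySubring p).subtype).range

lemma mem_sl2Away {M : SL2Q} : M ∈ sl2Away p ↔ ∀ i j, M i j ∈ awaySubring p :=
  SpecialLinearGroup.mem_range_map_subtype_iff

lemma matB_mem_sl2Away : matB ∈ sl2Away p :=
  mem_sl2Away.2 fun i j => by fin_cases i <;> fin_cases j <;> simp [one_mem]

lemma matQ_intCast_mem_sl2Away (k : ℤ) : matQ k ∈ sl2Away p :=
  mem_sl2Away.2 fun i j => by fin_cases i <;> fin_cases j <;> simp [one_mem]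

lemma matU_mem_sl2Away (hp : p ≠ 0) : matU p (Nat.cast_ne_zero.2 hp) ∈ sl2Away p :=
  mem_sl2Away.2 fun i j => by
    fin_cases i <;> fin_cases j <;> simp [inv_natCast_mem_awaySubring hp]

abbrev closureAQ (p : ℕ) : Subgroup SL2Q := Subgroup.closure {matA, matQ (1 / p)}

lemma matA_mem_closureAQ : matA ∈ closureAQ p := Subgroup.subset_closure (by simp)

lemma matQ_one_div_mem_closureAQ : matQ (1 / p) ∈ closureAQ p := Subgroup.subset_closure (by simp)

lemma matQ_intCast_mem_closureAQ (hp : p ≠ 0) (k : ℤ) : matQ k ∈ closureAQ p := by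
  have h := zpow_mem (matQ_one_div_mem_closureAQ (p := p)) (p * k)
  rwa [matQ_zpow, Int.cast_mul, Int.cast_natCast, mul_comm, ← mul_assoc, one_div,
    inv_mul_cancel₀ (Nat.cast_ne_zero.2 hp), one_mul] at h

lemma matQ_one_div_pow (hp : p ≠ 0) : matQ (1 / p) ^ p = matQ 1 := by
  rw [← zpow_natCast, matQ_zpow, Int.cast_natCast, mul_one_div_cancel (Nat.cast_ne_zero.2 hp)]

lemma matB_mem_closureAQ (hp : p ≠ 0) : matB ∈ closureAQ p := by
  rw [← matA_inv_mul_matQ_one_mul_matA_inv]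
  have hQ : matQ 1 ∈ closureAQ p := by exact_mod_cast matQ_intCast_mem_closureAQ hp 1
  exact mul_mem (mul_mem (inv_mem matA_mem_closureAQ) hQ) (inv_mem matA_mem_closureAQ)

lemma matU_natCast_eq (hp : p ≠ 0) : matU p (Nat.cast_ne_zero.2 hp) =
    matB⁻¹ * matQ (1 / p) * matA ^ (-(p : ℤ)) * matQ (1 / p) := by
  rw [matA_zpow, one_div, matU_eq_matB_inv_mul_matQ_mul_matL_mul_matQ]
  push_cast
  rfl

lemma matU_mem_closureAQ (hp : p ≠ 0) : matU p (Nat.cast_ne_zero.2 hp) ∈ closureAQ p := by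
  rw [matU_natCast_eq hp]
  exact mul_mem (mul_mem (mul_mem (inv_mem (matB_mem_closureAQ hp)) matQ_one_div_mem_closureAQ)
    (zpow_mem matA_mem_closureAQ _)) matQ_one_div_mem_closureAQ

lemma matU_pow_mem_closureAQ (hp : p ≠ 0) (n : ℕ) :
    matU ((p : ℚ) ^ n) (pow_ne_zero n (Nat.cast_ne_zero.2 hp)) ∈ closureAQ p := by
  rw [matU_pow]
  exact pow_mem (matU_mem_closureAQ hp) n

lemma matQ_mem_closureAQ (hp : p ≠ 0) {x : ℚ} (hx : x ∈ awaySubring p) : matQ x ∈ closureAQ p := by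
  obtain ⟨n, z, hz⟩ := hx
  have hpn : (p : ℚ) ^ n ≠ 0 := pow_ne_zero n (Nat.cast_ne_zero.2 hp)
  have hU : matU _ hpn ∈ closureAQ p := matU_pow_mem_closureAQ hp n
  have hzx : ((z * p ^ n : ℤ) : ℚ) = ((p : ℚ) ^ n) ^ 2 * x := by push_cast; rw [← hz]; ring
  have hconj : matQ x = (matU _ hpn)⁻¹ * matQ ((z * p ^ n : ℤ) : ℚ) * matU _ hpn := by
    rw [hzx, ← matU_mul_matQ_mul_matU_inv _ hpn]
    group
  rw [hconj]
  exact mul_mem (mul_mem (inv_mem hU) (matQ_intCast_mem_closureAQ hp _)) hU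

lemma matU_intCast_mem_closureAQ (hp : p ≠ 0) {a : ℤ} (ha : (a : ℚ) ≠ 0) {i : ℕ}
    (hai : Associated a ((p : ℤ) ^ i)) : matU a ha ∈ closureAQ p := by
  have hU := matU_pow_mem_closureAQ hp i
  rcases Int.associated_iff.1 hai with rfl | rfl
  · convert hU using 2
    norm_num
  · have hneg : matU ((-(p : ℤ) ^ i : ℤ) : ℚ) ha =
        matB ^ 2 * matU ((p : ℚ) ^ i) (pow_ne_zero i (Nat.cast_ne_zero.2 hp)) := by
      rw [matB_sq, ← matU_mul]
      congr 1
      push_cast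
      ring
    rw [hneg]
    exact mul_mem (pow_mem (matB_mem_closureAQ hp) 2) hU

lemma mem_closureAQ_of_apply_one_zero_eq_zero (hp : p.Prime) {M : SL2Q} (hM : M ∈ sl2Away p)
    (h10 : M 1 0 = 0) {a : ℤ} (h00 : M 0 0 = a) : M ∈ closureAQ p := by
  have hdet : (a : ℚ) * M 1 1 = 1 := by
    have := M.2
    rw [det_fin_two, h10, h00, mul_zero, sub_zero] at this
    exact this
  have ha : (a : ℚ) ≠ 0 := left_ne_zero_of_mul_eq_one hdet
  obtain ⟨n, z, hz⟩ := mem_sl2Away.1 hM 1 1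
  have hdvd : a ∣ (p : ℤ) ^ n := ⟨z, by
    have : (a : ℚ) * z = p ^ n := by rw [← hz, ← mul_assoc, hdet, one_mul]
    exact_mod_cast this.symm⟩
  obtain ⟨i, -, hai⟩ := (dvd_prime_pow (Nat.prime_iff_prime_int.1 hp) n).1 hdvd
  have hMeq : M = matU a ha * matQ (M 0 1 * M 1 1) := by
    ext i j
    fin_cases i <;> fin_cases j <;> simp [mul_apply]
    · exact h00
    · rw [mul_left_comm, hdet, mul_one]
    · exact h10
    · exact eq_inv_of_mul_eq_one_right hdet
  rw [hMeq]
  exact mul_mem (matU_intCast_mem_closureAQ hp.ne_zero ha hai)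
    (matQ_mem_closureAQ hp.ne_zero (mul_mem (mem_sl2Away.1 hM 0 1) (mem_sl2Away.1 hM 1 1)))

lemma mem_closureAQ_of_intCast_col (hp : p.Prime) {M : SL2Q} (hM : M ∈ sl2Away p) {a c : ℤ}
    (h00 : M 0 0 = a) (h10 : M 1 0 = c) : M ∈ closureAQ p := by
  induction hn : c.natAbs using Nat.strong_induction_on generalizing M a c with
  | _ n ih =>
    rcases eq_or_ne c 0 with rfl | hc
    · exact mem_closureAQ_of_apply_one_zero_eq_zero hp hM (by simpa using h10) h00
    -- one step of the Euclidean algorithm on the first column: `(a, c) ↦ (c, -(a % c))`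
    set g := matB * matQ (-(a / c : ℤ))
    have hg : g ∈ closureAQ p :=
      mul_mem (matB_mem_closureAQ hp.ne_zero) (matQ_intCast_mem_closureAQ hp.ne_zero _)
    have hgM : g * M ∈ closureAQ p := by
      refine ih (a % c).natAbs ?_
        (mul_mem (mul_mem matB_mem_sl2Away (matQ_intCast_mem_sl2Away _)) hM)
        (matB_mul_matQ_mul_apply_zero_zero _ M ▸ h10) ?_ (Int.natAbs_neg _)
      · rw [← hn, ← Int.natAbs_abs c]
        exact Int.natAbs_lt_natAbs_of_nonneg_of_lt (Int.emod_nonneg a hc) (Int.emod_lt_abs a hc)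
      · rw [matB_mul_matQ_mul_apply_one_zero, h00, h10, Int.emod_def]
        push_cast
        ring
    simpa using mul_mem (inv_mem hg) hgM

lemma exists_intCast_col_mul_matU_pow (hp : p ≠ 0) {M : SL2Q} (hM : M ∈ sl2Away p) :
    ∃ n : ℕ, ∃ a c : ℤ, (M * matU p (Nat.cast_ne_zero.2 hp) ^ n) 0 0 = a ∧
      (M * matU p (Nat.cast_ne_zero.2 hp) ^ n) 1 0 = c := by
  obtain ⟨n, a, ha⟩ := mem_sl2Away.1 hM 0 0
  obtain ⟨m, c, hc⟩ := mem_sl2Away.1 hM 1 0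
  refine ⟨n + m, a * p ^ m, c * p ^ n, ?_, ?_⟩ <;>
    rw [← matU_pow, mul_matU_apply_zero] <;> push_cast
  · rw [← ha, pow_add, mul_assoc]
  · rw [← hc, pow_add, mul_comm ((p : ℚ) ^ n), mul_assoc]

theorem sl2Away_le_closureAQ (hp : p.Prime) : sl2Away p ≤ closureAQ p := by
  intro M hM
  have hU := matU_mem_closureAQ hp.ne_zero
  obtain ⟨n, a, c, ha, hc⟩ := exists_intCast_col_mul_matU_pow hp.ne_zero hM
  have hMU := mem_closureAQ_of_intCast_col hp
    (mul_mem hM (pow_mem (matU_mem_sl2Away hp.ne_zero) n)) ha hc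
  simpa using mul_mem hMU (inv_mem (pow_mem hU n))

end

theorem stmt0 (p : ℕ) (hp : p.Prime) :
    matB = matA⁻¹ * (matQ (1/p))^p * matA⁻¹ ∧
    matU p (Nat.cast_ne_zero.mpr hp.ne_zero) =
      matB⁻¹ * matQ (1/p) * matA^(-(p:ℤ)) * matQ (1/p) ∧
    ∀ M : SL2Q,
      (∀ i j, ∃ a : ℤ, ∃ n : ℕ, (M : Matrix (Fin 2) (Fin 2) ℚ) i j = (a : ℚ) / (p:ℚ)^n) →
        M ∈ Subgroup.closure {matA, matQ (1/p)} := by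
  refine ⟨?_, matU_natCast_eq hp.ne_zero, fun M hM => sl2Away_le_closureAQ hp ?_⟩
  · rw [matQ_one_div_pow hp.ne_zero, matA_inv_mul_matQ_one_mul_matA_inv]
  · refine mem_sl2Away.2 fun i j => ?_
    obtain ⟨a, n, h⟩ := hM i j
    rw [h]
    exact intCast_div_pow_mem_awaySubring hp.ne_zero a n
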